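/- arXiv:math/0603724 — 5 statements merged into one kernel-verified Lean document; each statement's English description precedes it below -/
import Mathlib

section
/- Let ℓ be a prime and M a 2×2 matrix over ZMod ℓ that is not a scalar matrix and satisfies (M − a•1)² = 0 for some a ∈ ZMod ℓ. Then there is exactly one one-dimensional ZMod ℓ-subspace W of (Fin 2 → ZMod ℓ) that is invariant under M. -/
/-!
Write `M = N + a • 1` with `N ≠ 0` and `N² = 0`. A subspace is `M`-invariant iff it is
`N`-invariant. On a plane, `0 ≠ range N ≤ ker N` forces `ker N` to be a line, and it is
invariant. Conversely, `N` acts on an invariant line by a scalar `c` with `c² = 0`, so the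
line lies in `ker N` and hence equals it.
-/

open Module LinearMap

section InvariantLines

variable {K V : Type*} [Field K] [AddCommGroup V] [Module K V]

lemma mapsTo_sub_smul_one_iff (f : End K V) (a : K) (W : Submodule K V) :
    (∀ w ∈ W, (f - a • 1) w ∈ W) ↔ ∀ w ∈ W, f w ∈ W := by
  refine forall₂_congr fun w hw => ?_
  rw [LinearMap.sub_apply, LinearMap.smul_apply, End.one_apply,
    W.sub_mem_iff_left (W.smul_mem a hw)]

lemma finrank_ker_eq_one_of_sq_eq_zero (hV : finrank K V = 2) {N : End K V} (hN : N ≠ 0)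
    (hN2 : N ^ 2 = 0) : finrank K (ker N) = 1 := by
  have : FiniteDimensional K V := Module.finite_of_finrank_eq_succ hV
  have hrange_le_ker : range N ≤ ker N := range_le_ker_iff.mpr (by rwa [sq] at hN2)
  have hrank_nullity := finrank_range_add_finrank_ker N
  have hrange_pos : finrank K (range N) ≠ 0 :=
    fun h => hN (range_eq_bot.mp (Submodule.finrank_eq_zero.mp h))
  have := Submodule.finrank_mono hrange_le_ker
  omega

lemma le_ker_of_sq_eq_zero {N : End K V} (hN2 : N ^ 2 = 0) {W : Submodule K V}
    (hW : finrank K W = 1) (hNW : ∀ w ∈ W, N w ∈ W) : W ≤ ker N := by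
  obtain ⟨v, hv0, hspan⟩ := finrank_eq_one_iff'.mp hW
  obtain ⟨c, hc⟩ := hspan ⟨N v, hNW v v.2⟩
  replace hc : c • (v : V) = N v := congrArg Subtype.val hc
  have hc0 : c = 0 := by
    have : (c * c) • (v : V) = 0 := by
      rw [mul_smul, hc, ← map_smul, hc, ← End.mul_apply, ← sq, hN2, LinearMap.zero_apply]
    exact mul_self_eq_zero.mp ((smul_eq_zero.mp this).resolve_right (by simpa using hv0))
  intro w hw
  obtain ⟨d, hd⟩ := hspan ⟨w, hw⟩
  replace hd : d • (v : V) = w := congrArg Subtype.val hd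
  rw [mem_ker, ← hd, map_smul, ← hc, hc0, zero_smul, smul_zero]

theorem setOf_invariant_lines_eq_singleton_ker (hV : finrank K V = 2) {N : End K V}
    (hN : N ≠ 0) (hN2 : N ^ 2 = 0) :
    {W : Submodule K V | finrank K W = 1 ∧ ∀ w ∈ W, N w ∈ W} = {ker N} := by
  have hker := finrank_ker_eq_one_of_sq_eq_zero hV hN hN2
  have : FiniteDimensional K V := Module.finite_of_finrank_eq_succ hV
  ext W
  refine ⟨fun ⟨hW, hNW⟩ => ?_, ?_⟩
  · exact Submodule.eq_of_le_of_finrank_eq (le_ker_of_sq_eq_zero hN2 hW hNW) (hW.trans hker.symm)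
  · rintro rfl
    exact ⟨hker, fun w hw => by simp [mem_ker.mp hw]⟩

end InvariantLines

theorem one_invariant_line_of_ramified (ℓ : ℕ) [Fact ℓ.Prime]
    (M : Matrix (Fin 2) (Fin 2) (ZMod ℓ))
    (hM : ∀ c : ZMod ℓ, M ≠ c • (1 : Matrix (Fin 2) (Fin 2) (ZMod ℓ)))
    (a : ZMod ℓ) (ha : (M - a • (1 : Matrix (Fin 2) (Fin 2) (ZMod ℓ))) ^ 2 = 0) :
    {W : Submodule (ZMod ℓ) (Fin 2 → ZMod ℓ) |
      Module.finrank (ZMod ℓ) W = 1 ∧ ∀ w ∈ W, M.mulVec w ∈ W}.ncard = 1 := by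
  set N := Matrix.toLinAlgEquiv' (M - a • 1)
  have hN : N ≠ 0 :=
    (map_ne_zero_iff _ Matrix.toLinAlgEquiv'.injective).mpr (sub_ne_zero.mpr (hM a))
  have hN2 : N ^ 2 = 0 := by rw [← map_pow, ha, map_zero]
  have hN_eq : N = Matrix.toLin' M - a • 1 := by
    simp only [N, map_sub, map_smul, map_one]
    rfl
  have hlines : {W : Submodule (ZMod ℓ) (Fin 2 → ZMod ℓ) |
      finrank (ZMod ℓ) W = 1 ∧ ∀ w ∈ W, M.mulVec w ∈ W} =
      {W : Submodule (ZMod ℓ) (Fin 2 → ZMod ℓ) |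
        finrank (ZMod ℓ) W = 1 ∧ ∀ w ∈ W, N w ∈ W} := by
    simp only [hN_eq, mapsTo_sub_smul_one_iff, Matrix.toLin'_apply]
  rw [hlines, setOf_invariant_lines_eq_singleton_ker (by simp) hN hN2, Set.ncard_singleton]
end

section
/- Let B be a commutative ring that is free of finite rank n as a ℤ-module, let A be a subring of B that is also free of rank n as a ℤ-module, and let ℓ be a prime that does not divide the (finite) index of A in B as an additive subgroup. Then the inclusion A → B induces a ring isomorphism A ⧸ (ℓ·A) ≃+* B ⧸ (ℓ·B). -/
/-!
Multiplication by `ℓ` is bijective on the finite group `B ⧸ A`, since `ℓ` is prime to its order.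
Injectivity gives `ℓ B ∩ A = ℓ A`, so the induced map `A ⧸ ℓ A → B ⧸ ℓ B` is injective;
surjectivity gives `B = A + ℓ B`, so it is surjective.
-/

namespace AddSubgroup

variable {M : Type*} [AddCommGroup M] {H : AddSubgroup M} {n : ℕ}

theorem mem_of_nsmul_mem (hn : (Nat.card (M ⧸ H)).Coprime n) {x : M} (hx : n • x ∈ H) :
    x ∈ H := by
  rw [← QuotientAddGroup.eq_zero_iff] at hx ⊢
  exact hn.nsmul_right_bijective.injective (by simpa using hx)

theorem exists_sub_nsmul_mem (hn : (Nat.card (M ⧸ H)).Coprime n) (x : M) :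
    ∃ y, x - n • y ∈ H := by
  obtain ⟨q, hq⟩ := hn.nsmul_right_bijective.surjective (x : M ⧸ H)
  obtain ⟨y, rfl⟩ := QuotientAddGroup.mk_surjective q
  refine ⟨y, ?_⟩
  rw [← QuotientAddGroup.eq_zero_iff, QuotientAddGroup.mk_sub, QuotientAddGroup.mk_nsmul]
  exact sub_eq_zero.mpr hq.symm

end AddSubgroup

namespace Subring

variable {B : Type*} [CommRing B] (A : Subring B) {n : ℕ}

theorem span_natCast_le_comap_span_natCast (n : ℕ) :
    Ideal.span {(n : A)} ≤ (Ideal.span {(n : B)}).comap A.subtype := by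
  rw [← Ideal.map_le_iff_le_comap, Ideal.map_span, Set.image_singleton, map_natCast]

variable {A}

theorem comap_span_natCast_le_span_natCast (hn : (Nat.card (B ⧸ A.toAddSubgroup)).Coprime n) :
    (Ideal.span {(n : B)}).comap A.subtype ≤ Ideal.span {(n : A)} := by
  intro a ha
  obtain ⟨b, hb⟩ := Ideal.mem_span_singleton'.mp (Ideal.mem_comap.mp ha)
  have hnb : n • b = a := by rw [nsmul_eq_mul, mul_comm, hb, subtype_apply]
  have hbA : b ∈ A := AddSubgroup.mem_of_nsmul_mem hn (hnb ▸ a.2)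
  refine Ideal.mem_span_singleton'.mpr ⟨⟨b, hbA⟩, Subtype.ext ?_⟩
  simpa using hb

theorem quotientMap_span_natCast_surjective
    (hn : (Nat.card (B ⧸ A.toAddSubgroup)).Coprime n) :
    Function.Surjective
      (Ideal.quotientMap _ A.subtype (span_natCast_le_comap_span_natCast A n)) := by
  intro x
  obtain ⟨b, rfl⟩ := Ideal.Quotient.mk_surjective x
  obtain ⟨c, hc⟩ := AddSubgroup.exists_sub_nsmul_mem hn b
  refine ⟨Ideal.Quotient.mk _ ⟨_, hc⟩, ?_⟩
  rw [Ideal.quotientMap_mk, Ideal.Quotient.eq, subtype_apply, sub_sub_cancel_left]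
  exact neg_mem (nsmul_eq_mul n c ▸ Ideal.mul_mem_right c _ (Ideal.mem_span_singleton_self _))

noncomputable def quotientSpanNatCastEquiv (hn : (Nat.card (B ⧸ A.toAddSubgroup)).Coprime n) :
    A ⧸ Ideal.span {(n : A)} ≃+* B ⧸ Ideal.span {(n : B)} :=
  RingEquiv.ofBijective _
    ⟨Ideal.quotientMap_injective' (comap_span_natCast_le_span_natCast hn),
      quotientMap_span_natCast_surjective hn⟩

theorem quotientSpanNatCastEquiv_mk (hn : (Nat.card (B ⧸ A.toAddSubgroup)).Coprime n) (a : A) :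
    quotientSpanNatCastEquiv hn (Ideal.Quotient.mk _ a) = Ideal.Quotient.mk _ (a : B) :=
  rfl

end Subring

theorem quotient_iso_of_coprime_index_general (B : Type*) [CommRing B]
    (A : Subring B)
    (ℓ : ℕ) (hℓ : ℓ.Prime)
    (hcop : ¬ (ℓ ∣ Nat.card (B ⧸ A.toAddSubgroup))) :
    ∃ e : (A ⧸ Ideal.span {(ℓ : A)}) ≃+* (B ⧸ Ideal.span {(ℓ : B)}),
      ∀ a : A, e (Ideal.Quotient.mk _ a) = Ideal.Quotient.mk _ (a : B) := by
  have hn : (Nat.card (B ⧸ A.toAddSubgroup)).Coprime ℓ := (hℓ.coprime_iff_not_dvd.mpr hcop).symm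
  exact ⟨Subring.quotientSpanNatCastEquiv hn, Subring.quotientSpanNatCastEquiv_mk hn⟩

theorem quotient_iso_of_coprime_index (B : Type*) [CommRing B] [Module.Free ℤ B]
    (n : ℕ) (hB : Module.finrank ℤ B = n)
    (A : Subring B) [Module.Free ℤ A] (hA : Module.finrank ℤ A = n)
    (ℓ : ℕ) (hℓ : ℓ.Prime)
    (hcop : ¬ (ℓ ∣ Nat.card (B ⧸ A.toAddSubgroup))) :
    ∃ e : (A ⧸ Ideal.span {(ℓ : A)}) ≃+* (B ⧸ Ideal.span {(ℓ : B)}),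
      ∀ a : A, e (Ideal.Quotient.mk _ a) = Ideal.Quotient.mk _ (a : B) :=
  quotient_iso_of_coprime_index_general B A ℓ hℓ hcop
end

section
/- Let K be a number field with [K : ℚ] = 2 and ring of integers O_K, let f be a positive integer, and let O = ℤ + f·O_K be the order of conductor f in K (the subring of O_K consisting of elements congruent to a rational integer modulo f·O_K). If a prime ℓ divides f, then there is a ring isomorphism O ⧸ (ℓ·O) ≃+* DualNumber (ZMod ℓ). -/
open NumberField

/-- The order of conductor `f` in a number field `K`: the subring `ℤ + f·𝓞 K` of `𝓞 K`,
consisting of elements congruent to a rational integer modulo `f·𝓞 K`. -/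
def conductorOrder (K : Type*) [Field K] [NumberField K] (f : ℕ) : Subring (𝓞 K) where
  carrier := {x | ∃ a : ℤ, (f : 𝓞 K) ∣ (x - a)}
  zero_mem' := ⟨0, by simp⟩
  one_mem' := ⟨1, by simp⟩
  add_mem' := by
    rintro x y ⟨a, u, hu⟩ ⟨b, v, hv⟩
    exact ⟨a + b, u + v, by push_cast; rw [mul_add, ← hu, ← hv]; ring⟩
  neg_mem' := by
    rintro x ⟨a, u, hu⟩
    exact ⟨-a, -u, by push_cast; rw [mul_neg, ← hu]; ring⟩
  mul_mem' := by
    rintro x y ⟨a, u, hu⟩ ⟨b, v, hv⟩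
    refine ⟨a * b, u * y + (a : 𝓞 K) * v, ?_⟩
    rw [show ((a * b : ℤ) : 𝓞 K) = (a : 𝓞 K) * (b : 𝓞 K) by push_cast; ring,
      show x * y - (a : 𝓞 K) * (b : 𝓞 K) = (x - a) * y + (a : 𝓞 K) * (y - b) by ring,
      hu, hv]
    ring

set_option synthInstance.maxHeartbeats 400000

/-! ### Auxiliary API for dual numbers -/

noncomputable def mkD (ℓ : ℕ) (r s : ZMod ℓ) : DualNumber (ZMod ℓ) :=
  TrivSqZeroExt.inl r + TrivSqZeroExt.inr s

lemma mkD_fst (ℓ : ℕ) (r s : ZMod ℓ) : (mkD ℓ r s).fst = r := by simp [mkD]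

lemma mkD_snd (ℓ : ℕ) (r s : ZMod ℓ) : (mkD ℓ r s).snd = s := by simp [mkD]

lemma mkD_mul (ℓ : ℕ) (r s r' s' : ZMod ℓ) :
    mkD ℓ r s * mkD ℓ r' s' = mkD ℓ (r * r') (r * s' + r' * s) := by
  apply TrivSqZeroExt.ext <;>
    simp [mkD_fst, mkD_snd, TrivSqZeroExt.fst_mul, TrivSqZeroExt.snd_mul, smul_eq_mul, mul_comm]

lemma mkD_add (ℓ : ℕ) (r s r' s' : ZMod ℓ) :
    mkD ℓ r s + mkD ℓ r' s' = mkD ℓ (r + r') (s + s') := by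
  apply TrivSqZeroExt.ext <;> simp [mkD_fst, mkD_snd, mkD]

lemma mkD_one (ℓ : ℕ) : mkD ℓ 1 0 = 1 := by
  apply TrivSqZeroExt.ext <;> simp [mkD_fst, mkD_snd]

lemma mkD_zero (ℓ : ℕ) : mkD ℓ 0 0 = 0 := by
  apply TrivSqZeroExt.ext <;> simp [mkD_fst, mkD_snd]

lemma mkD_eq_zero_iff (ℓ : ℕ) (r s : ZMod ℓ) : mkD ℓ r s = 0 ↔ r = 0 ∧ s = 0 := by
  rw [← mkD_zero]
  constructor
  · intro h
    exact ⟨by simpa [mkD_fst] using congrArg TrivSqZeroExt.fst h,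
      by simpa [mkD_snd] using congrArg TrivSqZeroExt.snd h⟩
  · rintro ⟨rfl, rfl⟩; rfl

lemma mkD_surj (ℓ : ℕ) (z : DualNumber (ZMod ℓ)) : ∃ r s, mkD ℓ r s = z :=
  ⟨z.fst, z.snd, TrivSqZeroExt.ext (by simp [mkD_fst]) (by simp [mkD_snd])⟩

/-! ### Existence of a `ℤ`-basis `1, ω` of `𝓞 K` -/

lemma exists_omega (K : Type*) [Field K] [NumberField K]
    (hdeg : Module.finrank ℚ K = 2) :
    ∃ ω : 𝓞 K, (∀ x : 𝓞 K, ∃ p : ℤ × ℤ, x = (p.1 : 𝓞 K) + p.2 • ω) ∧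
      ∀ a b : ℤ, (a : 𝓞 K) + b • ω = 0 → a = 0 ∧ b = 0 := by
  classical
  set S : Submodule ℤ (𝓞 K) := Submodule.span ℤ {(1 : 𝓞 K)} with hS
  have hmemS : ∀ x : 𝓞 K, x ∈ S ↔ ∃ a : ℤ, x = (a : 𝓞 K) := by
    intro x
    rw [hS, Submodule.mem_span_singleton]
    constructor
    · rintro ⟨a, rfl⟩; exact ⟨a, by simp [zsmul_eq_mul]⟩
    · rintro ⟨a, rfl⟩; exact ⟨a, by simp [zsmul_eq_mul]⟩
  have hrank : Module.finrank ℤ (𝓞 K) = 2 := by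
    rw [RingOfIntegers.rank, hdeg]
  set Q := (𝓞 K) ⧸ S with hQ
  haveI : NoZeroSMulDivisors ℤ Q := by
    constructor
    intro n x h
    by_cases hn : n = 0
    · exact Or.inl hn
    · right
      obtain ⟨y, rfl⟩ := Submodule.Quotient.mk_surjective S x
      rw [← Submodule.Quotient.mk_smul, Submodule.Quotient.mk_eq_zero] at h
      rw [hmemS] at h
      obtain ⟨m, hm⟩ := h
      have hyK : (n : K) * (y : K) = (m : K) := by
        have := congrArg (algebraMap (𝓞 K) K) hm
        push_cast at this ⊢
        rw [zsmul_eq_mul] at this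
        exact_mod_cast this
      have hnK : (n : K) ≠ 0 := Int.cast_ne_zero.mpr hn
      have hyQ : (y : K) = algebraMap ℚ K ((m : ℚ) / (n : ℚ)) := by
        field_simp
        rw [map_div₀, map_intCast, map_intCast, eq_div_iff hnK, ← hyK]; ring
      have hint : IsIntegral ℤ ((m : ℚ) / (n : ℚ)) := by
        have : IsIntegral ℤ (y : K) := y.2
        rw [hyQ] at this
        exact IsIntegral.tower_bot_of_field this
      obtain ⟨z, hz⟩ := IsIntegrallyClosed.isIntegral_iff.mp hint
      have hy : y = (z : 𝓞 K) := by
        have h1 : ((z : 𝓞 K) : K) = algebraMap ℚ K ((m : ℚ) / (n : ℚ)) := by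
          rw [← hz]; simp
        have h2 : (y : K) = ((z : 𝓞 K) : K) := by rw [hyQ, h1]
        exact_mod_cast h2
      rw [Submodule.Quotient.mk_eq_zero, hmemS]
      exact ⟨z, hy⟩
  haveI : Module.Finite ℤ Q := Module.Finite.quotient ℤ S
  haveI : Module.Free ℤ Q := Module.free_of_finite_type_torsion_free'
  have hQrank : Module.finrank ℤ Q = 1 := by
    have hle : Module.finrank ℤ Q ≤ 1 := by
      by_contra hgt
      push_neg at hgt
      set n := Module.finrank ℤ Q with hn
      let c : Module.Basis (Fin n) ℤ Q := Module.finBasis ℤ Q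
      choose lift hlift using fun i => Submodule.mkQ_surjective S (c i)
      set F : Option (Fin n) → 𝓞 K := fun i => Option.elim i 1 lift with hF
      have hmk1 : S.mkQ (1 : 𝓞 K) = 0 := by
        rw [Submodule.mkQ_apply, Submodule.Quotient.mk_eq_zero]
        exact Submodule.mem_span_singleton_self _
      have hli : LinearIndependent ℤ F := by
        rw [Fintype.linearIndependent_iff]
        intro g hg
        have hq : Finset.univ.sum (fun i : Fin n => g (some i) • c i) = 0 := by
          have h2 := congrArg S.mkQ hg
          rw [map_sum, map_zero] at h2
          simp only [map_smul] at h2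
          rw [Fintype.sum_option] at h2
          simp only [hF, Option.elim] at h2
          rw [hmk1, smul_zero, zero_add] at h2
          simpa only [hlift] using h2
        have hgsome : ∀ i : Fin n, g (some i) = 0 :=
          Fintype.linearIndependent_iff.mp c.linearIndependent _ hq
        intro i
        match i with
        | some i => exact hgsome i
        | none =>
          have h3 : g none • (1 : 𝓞 K) = 0 := by
            rw [Fintype.sum_option] at hg
            simp only [hF, Option.elim, hgsome, zero_smul, Finset.sum_const_zero, add_zero] at hg
            exact hg
          rw [zsmul_eq_mul, mul_one] at h3
          exact_mod_cast h3
      have hcard := hli.fintype_card_le_finrank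
      rw [Fintype.card_option, Fintype.card_fin, hrank] at hcard
      omega
    have hge : 0 < Module.finrank ℤ Q := by
      haveI : Nontrivial Q := by
        by_contra h
        rw [not_nontrivial_iff_subsingleton] at h
        rw [Submodule.Quotient.subsingleton_iff] at h
        have h2 := finrank_span_le_card (R := ℤ) ({(1 : 𝓞 K)} : Set (𝓞 K))
        rw [show Submodule.span ℤ ({(1 : 𝓞 K)} : Set (𝓞 K)) = ⊤ from h] at h2
        rw [finrank_top] at h2
        simp at h2
        omega
      exact Module.finrank_pos
    omega
  let c : Module.Basis (Fin 1) ℤ Q := (Module.finBasis ℤ Q).reindex (finCongr hQrank)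
  obtain ⟨ω, hω⟩ := Submodule.Quotient.mk_surjective S (c 0)
  refine ⟨ω, ?_, ?_⟩
  · intro x
    set b := c.repr (Submodule.Quotient.mk x) 0 with hb
    have hqx : (Submodule.Quotient.mk x : Q) = b • c 0 := by
      conv_lhs => rw [← c.sum_repr (Submodule.Quotient.mk x)]
      rw [Fin.sum_univ_one]
    have hmem : x - b • ω ∈ S := by
      rw [← Submodule.Quotient.mk_eq_zero, Submodule.Quotient.mk_sub,
        Submodule.Quotient.mk_smul, hω, hqx, sub_self]
    rw [hmemS] at hmem
    obtain ⟨a, ha⟩ := hmem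
    exact ⟨(a, b), by rw [← ha]; ring⟩
  · intro a b hab
    have hqb : (b • Submodule.Quotient.mk ω : Q) = 0 := by
      have h2 := congrArg (Submodule.Quotient.mk (p := S)) hab
      rw [Submodule.Quotient.mk_add, Submodule.Quotient.mk_smul, Submodule.Quotient.mk_zero] at h2
      rw [show (Submodule.Quotient.mk (a : 𝓞 K) : Q) = 0 from
        (Submodule.Quotient.mk_eq_zero S).mpr ((hmemS _).mpr ⟨a, rfl⟩), zero_add] at h2
      exact h2
    have hb0 : b = 0 := by
      rw [hω] at hqb
      rcases smul_eq_zero.mp hqb with h | h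
      · exact h
      · exact absurd h (c.ne_zero 0)
    refine ⟨?_, hb0⟩
    rw [hb0, zero_smul, add_zero] at hab
    exact_mod_cast hab

theorem conductor_order_quotient_iso_dualNumber (K : Type*) [Field K] [NumberField K]
    (hdeg : Module.finrank ℚ K = 2) (f : ℕ) (hf : 0 < f)
    (ℓ : ℕ) (hℓ : ℓ.Prime) (hdvd : ℓ ∣ f) :
    Nonempty ((conductorOrder K f ⧸ Ideal.span {(ℓ : conductorOrder K f)}) ≃+*
      DualNumber (ZMod ℓ)) := by
  classical
  haveI : NeZero ℓ := ⟨hℓ.ne_zero⟩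
  obtain ⟨ω, hex, huniq⟩ := exists_omega K hdeg
  choose rep hrep using hex
  set A : 𝓞 K → ℤ := fun x => (rep x).1 with hA
  set B : 𝓞 K → ℤ := fun x => (rep x).2 with hB
  have hrep' : ∀ x : 𝓞 K, x = (A x : 𝓞 K) + (B x : 𝓞 K) * ω := by
    intro x
    have := hrep x
    rwa [zsmul_eq_mul] at this
  have huniq' : ∀ a b : ℤ, (a : 𝓞 K) + (b : 𝓞 K) * ω = 0 → a = 0 ∧ b = 0 := by
    intro a b h
    exact huniq a b (by rwa [zsmul_eq_mul])
  have key : ∀ (x : 𝓞 K) (a b : ℤ), x = (a : 𝓞 K) + (b : 𝓞 K) * ω → A x = a ∧ B x = b := by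
    intro x a b h
    have h0 : ((A x - a : ℤ) : 𝓞 K) + ((B x - b : ℤ) : 𝓞 K) * ω = 0 := by
      push_cast
      linear_combination h - hrep' x
    obtain ⟨h1, h2⟩ := huniq' _ _ h0
    omega
  have hf0 : (f : ℤ) ≠ 0 := by exact_mod_cast hf.ne'
  -- membership criterion
  have hmem : ∀ x : 𝓞 K, x ∈ conductorOrder K f ↔ (f : ℤ) ∣ B x := by
    intro x
    constructor
    · rintro ⟨a, u, hu⟩
      have hxu : x = ((a + f * A u : ℤ) : 𝓞 K) + ((f * B u : ℤ) : 𝓞 K) * ω := by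
        have h2 := hrep' u
        have h3 : x - (a : 𝓞 K) = (f : 𝓞 K) * u := hu
        push_cast
        linear_combination h3 + ((f : 𝓞 K)) * h2
      rw [(key x _ _ hxu).2]
      exact ⟨B u, rfl⟩
    · rintro ⟨c, hc⟩
      refine ⟨A x, (c : 𝓞 K) * ω, ?_⟩
      have h2 := hrep' x
      rw [hc] at h2
      push_cast at h2 ⊢
      linear_combination h2
  have hfl : ((f : ℤ) : ZMod ℓ) = 0 := by
    rw [ZMod.intCast_zmod_eq_zero_iff_dvd]; exact_mod_cast hdvd
  have hflN : ((f : ℕ) : ZMod ℓ) = 0 := by exact_mod_cast hfl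
  set O := conductorOrder K f with hO
  set φfun : O → DualNumber (ZMod ℓ) :=
    fun x => mkD ℓ ((A (x : 𝓞 K) : ℤ) : ZMod ℓ) ((B (x : 𝓞 K) / (f : ℤ) : ℤ) : ZMod ℓ) with hφfun
  have hCdiv : ∀ (b c : ℤ), b = f * c → b / (f : ℤ) = c := by
    intro b c h
    rw [h]
    exact Int.mul_ediv_cancel_left _ hf0
  have hφmul : ∀ x y : O, φfun (x * y) = φfun x * φfun y := by
    intro x y
    obtain ⟨cx, hcx⟩ := (hmem x.1).mp x.2
    obtain ⟨cy, hcy⟩ := (hmem y.1).mp y.2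
    have hxy : ((x * y : O) : 𝓞 K) =
        ((A x.1 * A y.1 + f * cx * (f * cy) * A (ω * ω) : ℤ) : 𝓞 K) +
        ((f * (A x.1 * cy + A y.1 * cx + cx * (f * cy) * B (ω * ω)) : ℤ) : 𝓞 K) * ω := by
      have h1 := hrep' x.1
      have h2 := hrep' y.1
      have h3 := hrep' (ω * ω)
      rw [hcx] at h1
      rw [hcy] at h2
      have hco : ((x * y : O) : 𝓞 K) = (x.1 : 𝓞 K) * y.1 := rfl
      rw [hco]
      push_cast at h1 h2 h3 ⊢
      linear_combination (y.1 : 𝓞 K) * h1 +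
        ((A x.1 : ℤ) + ((f : ℕ) : 𝓞 K) * ((cx : ℤ) : 𝓞 K) * ω) * h2 +
        (((f : ℕ) : 𝓞 K) * ((cx : ℤ) : 𝓞 K) * (((f : ℕ) : 𝓞 K) * ((cy : ℤ) : 𝓞 K))) * h3
    obtain ⟨hAxy, hBxy⟩ := key _ _ _ hxy
    simp only [hφfun, mkD_mul]
    rw [hAxy, hCdiv _ _ hBxy, hCdiv _ _ hcx, hCdiv _ _ hcy]
    congr 1
    · push_cast
      rw [hflN]
      ring
    · push_cast
      rw [hflN]
      ring
  have hφadd : ∀ x y : O, φfun (x + y) = φfun x + φfun y := by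
    intro x y
    obtain ⟨cx, hcx⟩ := (hmem x.1).mp x.2
    obtain ⟨cy, hcy⟩ := (hmem y.1).mp y.2
    have hxy : ((x + y : O) : 𝓞 K) =
        ((A x.1 + A y.1 : ℤ) : 𝓞 K) + ((f * (cx + cy) : ℤ) : 𝓞 K) * ω := by
      have hco : ((x + y : O) : 𝓞 K) = (x.1 : 𝓞 K) + y.1 := rfl
      have h1 := hrep' x.1
      have h2 := hrep' y.1
      rw [hcx] at h1
      rw [hcy] at h2
      rw [hco]
      push_cast at h1 h2 ⊢
      linear_combination h1 + h2
    obtain ⟨hAxy, hBxy⟩ := key _ _ _ hxy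
    simp only [hφfun, mkD_add]
    rw [hAxy, hCdiv _ _ hBxy, hCdiv _ _ hcx, hCdiv _ _ hcy]
    congr 1
    · push_cast; ring
    · push_cast; ring
  have hφone : φfun 1 = 1 := by
    have h1 : ((1 : O) : 𝓞 K) = ((1 : ℤ) : 𝓞 K) + ((0 : ℤ) : 𝓞 K) * ω := by push_cast; ring
    obtain ⟨hA1, hB1⟩ := key _ _ _ h1
    simp only [hφfun]
    rw [hA1, hB1]
    norm_num
    exact mkD_one ℓ
  set φ : O →+* DualNumber (ZMod ℓ) :=
    { toFun := φfun
      map_one' := hφone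
      map_mul' := hφmul
      map_zero' := by
        have h0 : ((0 : O) : 𝓞 K) = ((0 : ℤ) : 𝓞 K) + ((0 : ℤ) : 𝓞 K) * ω := by push_cast; ring
        obtain ⟨hA0, hB0⟩ := key _ _ _ h0
        simp only [hφfun]
        rw [hA0, hB0]
        norm_num
        exact mkD_zero ℓ
      map_add' := hφadd } with hφ
  -- surjectivity
  have hsurj : Function.Surjective φ := by
    intro z
    obtain ⟨r, s, rfl⟩ := mkD_surj ℓ z
    set a : ℤ := (r.val : ℤ) with ha
    set cc : ℤ := (s.val : ℤ) with hcc
    set x : 𝓞 K := (a : 𝓞 K) + ((f * cc : ℤ) : 𝓞 K) * ω with hx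
    have hxO : x ∈ O := by
      refine ⟨a, (cc : 𝓞 K) * ω, ?_⟩
      rw [hx]
      push_cast
      ring
    obtain ⟨hAx, hBx⟩ := key x a (f * cc) rfl
    refine ⟨⟨x, hxO⟩, ?_⟩
    show mkD ℓ ((A x : ℤ) : ZMod ℓ) ((B x / (f : ℤ) : ℤ) : ZMod ℓ) = _
    rw [hAx, hBx, hCdiv (f * cc) cc rfl]
    congr 1
    · rw [ha]; push_cast; rw [ZMod.natCast_val, ZMod.cast_id]
    · rw [hcc]; push_cast; rw [ZMod.natCast_val, ZMod.cast_id]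
  -- kernel
  have hker : RingHom.ker φ = Ideal.span {(ℓ : O)} := by
    ext x
    rw [RingHom.mem_ker, Ideal.mem_span_singleton]
    have hℓO : ((ℓ : O) : 𝓞 K) = ((ℓ : ℤ) : 𝓞 K) := by push_cast; ring
    constructor
    · intro h
      obtain ⟨cx, hcx⟩ := (hmem x.1).mp x.2
      have h2 : mkD ℓ ((A x.1 : ℤ) : ZMod ℓ) ((B x.1 / (f : ℤ) : ℤ) : ZMod ℓ) = 0 := h
      rw [mkD_eq_zero_iff] at h2
      obtain ⟨h3, h4⟩ := h2
      rw [ZMod.intCast_zmod_eq_zero_iff_dvd] at h3 h4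
      obtain ⟨a₀, ha₀⟩ := h3
      rw [hCdiv _ _ hcx] at h4
      obtain ⟨c₀, hc₀⟩ := h4
      set y : 𝓞 K := (a₀ : 𝓞 K) + ((f * c₀ : ℤ) : 𝓞 K) * ω with hy
      have hyO : y ∈ O := ⟨a₀, (c₀ : 𝓞 K) * ω, by rw [hy]; push_cast; ring⟩
      refine ⟨⟨y, hyO⟩, ?_⟩
      apply Subtype.ext
      show x.1 = ((ℓ : O) : 𝓞 K) * y
      rw [hℓO, hy]
      have h5 := hrep' x.1
      rw [hcx, ha₀, hc₀] at h5
      push_cast at h5 ⊢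
      linear_combination h5
    · rintro ⟨y, rfl⟩
      rw [map_mul]
      have hφℓ : φ (ℓ : O) = 0 := by
        show mkD ℓ ((A ((ℓ : O) : 𝓞 K) : ℤ) : ZMod ℓ)
          ((B ((ℓ : O) : 𝓞 K) / (f : ℤ) : ℤ) : ZMod ℓ) = 0
        obtain ⟨hAℓ, hBℓ⟩ := key ((ℓ : O) : 𝓞 K) ℓ 0 (by rw [hℓO]; push_cast; ring)
        rw [hAℓ, hBℓ, mkD_eq_zero_iff]
        constructor
        · rw [ZMod.intCast_zmod_eq_zero_iff_dvd]
        · norm_num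
      rw [hφℓ, zero_mul]
  exact ⟨(Ideal.quotEquivOfEq hker.symm).trans (RingHom.quotientKerEquivOfSurjective hsurj)⟩
end

section
/- Let K be a number field with [K : ℚ] = 2 and ring of integers O_K, let ℓ be a prime such that the ideal generated by ℓ in O_K is a prime ideal (ℓ inert), and let ρ : O_K →+* Matrix (Fin 2) (Fin 2) (ZMod ℓ) be a ring homomorphism such that ρ(α₀) is not a scalar matrix for some α₀ ∈ O_K. Then for every nonzero vector v ∈ (Fin 2 → ZMod ℓ) there exists α ∈ O_K with ρ(α).mulVec v ∉ Submodule.span (ZMod ℓ) {v}. -/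
/-!
If every `ρ α` maps `v` into its own line, then `v` is a common eigenvector of `ρ(𝓞 K)` and
`α ↦ (eigenvalue of ρ α on v)` is a ring homomorphism `𝓞 K →+* ZMod ℓ`. Its kernel contains `ℓ`,
hence equals the maximal ideal `(ℓ)`, so `ZMod ℓ ≃ 𝓞 K ⧸ (ℓ)`; but an inert prime has residue field
of order `ℓ ^ [K : ℚ] = ℓ ^ 2`.
-/

open NumberField

namespace Matrix

variable {R F n : Type*} [Semiring R] [Field F] [Fintype n] [DecidableEq n]
  {ρ : R →+* Matrix n n F} {v : n → F}

noncomputable def eigenvalueOn (hρ : ∀ a, ρ a *ᵥ v ∈ F ∙ v) (a : R) : F :=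
  (Submodule.mem_span_singleton.mp (hρ a)).choose

theorem eigenvalueOn_smul (hρ : ∀ a, ρ a *ᵥ v ∈ F ∙ v) (a : R) :
    eigenvalueOn hρ a • v = ρ a *ᵥ v :=
  (Submodule.mem_span_singleton.mp (hρ a)).choose_spec

noncomputable def eigenvalueHom (hv : v ≠ 0) (hρ : ∀ a, ρ a *ᵥ v ∈ F ∙ v) : R →+* F where
  toFun := eigenvalueOn hρ
  map_one' := smul_left_injective F hv <| by simp [eigenvalueOn_smul]
  map_mul' a b := smul_left_injective F hv <| by
    simp [eigenvalueOn_smul, mul_comm (eigenvalueOn hρ a), ← smul_smul, ← mulVec_smul,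
      mulVec_mulVec]
  map_zero' := smul_left_injective F hv <| by simp [eigenvalueOn_smul]
  map_add' a b := smul_left_injective F hv <| by simp [eigenvalueOn_smul, add_smul, add_mulVec]

end Matrix

open Module Ideal Submodule in
theorem NumberField.RingOfIntegers.isEmpty_ringHom_zmod_of_span_isPrime {K : Type*} [Field K]
    [NumberField K] (hK : 1 < finrank ℚ K) (p : ℕ) [hp : Fact p.Prime]
    (hinert : (span {(p : 𝓞 K)}).IsPrime) : IsEmpty (𝓞 K →+* ZMod p) := by
  refine ⟨fun φ => ?_⟩
  have hmax : (span {(p : 𝓞 K)}).IsMaximal :=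
    hinert.isMaximal (by simpa using hp.out.ne_zero)
  have hker : span {(p : 𝓞 K)} = RingHom.ker φ :=
    hmax.eq_of_le (RingHom.ker_ne_top φ) (by simp [Ideal.span_le])
  have hquot : Nat.card (𝓞 K ⧸ RingHom.ker φ) = p := by
    rw [Nat.card_congr (RingHom.quotientKerEquivOfSurjective (ZMod.ringHom_surjective φ)).toEquiv,
      Nat.card_zmod]
  have hpow : p ^ finrank ℚ K = p ^ 1 := by
    rw [← RingOfIntegers.rank, ← absNorm_span_natCast, hker, absNorm_apply, cardQuot_apply,
      hquot, pow_one]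
  exact hK.ne' (Nat.pow_right_injective hp.out.two_le hpow)

theorem distortion_exists_of_inert_general (K : Type*) [Field K] [NumberField K]
    (hdeg : Module.finrank ℚ K = 2) (ℓ : ℕ) [Fact ℓ.Prime]
    (hinert : (Ideal.span {(ℓ : 𝓞 K)}).IsPrime)
    (ρ : 𝓞 K →+* Matrix (Fin 2) (Fin 2) (ZMod ℓ))
    (v : Fin 2 → ZMod ℓ) (hv : v ≠ 0) :
    ∃ α : 𝓞 K, (ρ α).mulVec v ∉ Submodule.span (ZMod ℓ) {v} := by
  by_contra! hρ
  exact (RingOfIntegers.isEmpty_ringHom_zmod_of_span_isPrime (hdeg ▸ one_lt_two) ℓ hinert).false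
    (Matrix.eigenvalueHom hv hρ)

theorem distortion_exists_of_inert (K : Type*) [Field K] [NumberField K]
    (hdeg : Module.finrank ℚ K = 2) (ℓ : ℕ) [Fact ℓ.Prime]
    (hinert : (Ideal.span {(ℓ : 𝓞 K)}).IsPrime)
    (ρ : 𝓞 K →+* Matrix (Fin 2) (Fin 2) (ZMod ℓ))
    (α₀ : 𝓞 K) (hα₀ : ∀ c : ZMod ℓ, ρ α₀ ≠ c • (1 : Matrix (Fin 2) (Fin 2) (ZMod ℓ)))
    (v : Fin 2 → ZMod ℓ) (hv : v ≠ 0) :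
    ∃ α : 𝓞 K, (ρ α).mulVec v ∉ Submodule.span (ZMod ℓ) {v} :=
  distortion_exists_of_inert_general K hdeg ℓ hinert ρ v hv
end

section
/- Let K be a number field with [K : ℚ] = 2 and ring of integers O_K, let ℓ be a prime such that the ideal generated by ℓ in O_K factors as P * Q for distinct maximal ideals P ≠ Q (ℓ split), and let ρ : O_K →+* Matrix (Fin 2) (Fin 2) (ZMod ℓ) be a ring homomorphism such that ρ(α₀) is not a scalar matrix for some α₀ ∈ O_K. Then there are exactly two one-dimensional ZMod ℓ-subspaces W of (Fin 2 → ZMod ℓ) that are invariant under ρ(α) for every α ∈ O_K; for every other one-dimensional subspace W' there exists α with ρ(α) mapping some vector of W' outside W'. -/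
open NumberField

set_option maxHeartbeats 1000000
set_option synthInstance.maxHeartbeats 400000

/-- If a ring hom into 2×2 matrices over `ZMod ℓ` kills an ideal whose quotient has
cardinality `ℓ`, then every value of the hom is a scalar matrix. -/
theorem aux_scalar_of_ker {R : Type*} [CommRing R] {ℓ : ℕ} [Fact ℓ.Prime]
    (J : Ideal R) (hcard : Nat.card (R ⧸ J) = ℓ) (hℓJ : (ℓ : R) ∈ J)
    (ρ : R →+* Matrix (Fin 2) (Fin 2) (ZMod ℓ)) (hker : ∀ y ∈ J, ρ y = 0)
    (α : R) : ∃ c : ZMod ℓ, ρ α = c • 1 := by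
  have hlp : ℓ.Prime := Fact.out
  haveI : Nontrivial (R ⧸ J) := by
    rcases subsingleton_or_nontrivial (R ⧸ J) with h | h
    · exfalso
      have h1 : Nat.card (R ⧸ J) = 1 :=
        Nat.card_eq_one_iff_unique.mpr ⟨h, ⟨0⟩⟩
      rw [hcard] at h1
      exact hlp.one_lt.ne' h1
    · exact h
  haveI : Finite (R ⧸ J) := by
    refine Nat.finite_of_card_ne_zero ?_
    rw [hcard]; exact hlp.pos.ne'
  have hℓ0 : ((ℓ : ℕ) : R ⧸ J) = 0 := by
    rw [← map_natCast (Ideal.Quotient.mk J)]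
    exact Ideal.Quotient.eq_zero_iff_mem.mpr hℓJ
  have hdvd : ringChar (R ⧸ J) ∣ ℓ := ringChar.dvd hℓ0
  have hne1 : ringChar (R ⧸ J) ≠ 1 := CharP.ringChar_ne_one
  have hchar : ringChar (R ⧸ J) = ℓ :=
    ((Nat.Prime.eq_one_or_self_of_dvd hlp _ hdvd).resolve_left hne1)
  haveI : CharP (R ⧸ J) ℓ := hchar ▸ ringChar.charP (R ⧸ J)
  set φ : ZMod ℓ →+* R ⧸ J := ZMod.castHom (dvd_refl ℓ) (R ⧸ J)
  haveI : Fintype (R ⧸ J) := Fintype.ofFinite _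
  have hinj : Function.Injective φ := φ.injective
  have hbij : Function.Bijective φ := by
    rw [Fintype.bijective_iff_injective_and_card]
    refine ⟨hinj, ?_⟩
    rw [ZMod.card, ← Nat.card_eq_fintype_card, hcard]
  obtain ⟨c, hc⟩ := hbij.2 (Ideal.Quotient.mk J α)
  refine ⟨c, ?_⟩
  have hmem : α - ((c.val : ℕ) : R) ∈ J := by
    rw [← Ideal.Quotient.eq_zero_iff_mem, map_sub, map_natCast, ← hc]
    have h2 : φ c = ((c.val : ℕ) : R ⧸ J) := by
      rw [← map_natCast φ (c.val), ZMod.natCast_val, ZMod.cast_id]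
    rw [h2, sub_self]
  have h1 : α = (α - ((c.val : ℕ) : R)) + ((c.val : ℕ) : R) := by ring
  rw [h1, map_add, hker _ hmem, zero_add, map_natCast]
  have h3 : ((c.val : ℕ) : Matrix (Fin 2) (Fin 2) (ZMod ℓ)) =
      ((c.val : ℕ) : ZMod ℓ) • (1 : Matrix (Fin 2) (Fin 2) (ZMod ℓ)) := by
    rw [Nat.cast_smul_eq_nsmul, nsmul_eq_mul, mul_one]
  rw [h3, ZMod.natCast_val, ZMod.cast_id]

theorem two_invariant_lines_of_split (K : Type*) [Field K] [NumberField K]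
    (hdeg : Module.finrank ℚ K = 2) (ℓ : ℕ) [Fact ℓ.Prime]
    (P Q : Ideal (𝓞 K)) (hP : P.IsMaximal) (hQ : Q.IsMaximal) (hPQ : P ≠ Q)
    (hsplit : Ideal.span {(ℓ : 𝓞 K)} = P * Q)
    (ρ : 𝓞 K →+* Matrix (Fin 2) (Fin 2) (ZMod ℓ))
    (α₀ : 𝓞 K) (hα₀ : ∀ c : ZMod ℓ, ρ α₀ ≠ c • (1 : Matrix (Fin 2) (Fin 2) (ZMod ℓ))) :
    {W : Submodule (ZMod ℓ) (Fin 2 → ZMod ℓ) |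
      Module.finrank (ZMod ℓ) W = 1 ∧ ∀ α : 𝓞 K, ∀ w ∈ W, (ρ α).mulVec w ∈ W}.ncard = 2 := by
  classical
  have hlp : ℓ.Prime := Fact.out
  -- ρ kills the ideal (ℓ)
  have hcast0 : ((ℓ : ℕ) : Matrix (Fin 2) (Fin 2) (ZMod ℓ)) = 0 := by
    have := map_natCast (algebraMap (ZMod ℓ) (Matrix (Fin 2) (Fin 2) (ZMod ℓ))) ℓ
    rw [← this, ZMod.natCast_self, map_zero]
  have hρℓ : ∀ y ∈ Ideal.span {(ℓ : 𝓞 K)}, ρ y = 0 := by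
    intro y hy
    obtain ⟨x, rfl⟩ := Ideal.mem_span_singleton.mp hy
    rw [map_mul, map_natCast, hcast0, zero_mul]
  -- norms of P and Q are both ℓ
  have hnorm : Ideal.absNorm P * Ideal.absNorm Q = ℓ ^ 2 := by
    rw [← _root_.map_mul (Ideal.absNorm (S := 𝓞 K)), ← hsplit, Ideal.absNorm_span_singleton]
    have h1 : (ℓ : 𝓞 K) = algebraMap ℤ (𝓞 K) (ℓ : ℤ) := by simp
    rw [h1, Algebra.norm_algebraMap_of_basis (RingOfIntegers.basis K)]
    rw [show Fintype.card (Module.Free.ChooseBasisIndex ℤ (𝓞 K)) = 2 by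
      rw [← Module.finrank_eq_card_chooseBasisIndex, RingOfIntegers.rank, hdeg]]
    simp [Int.natAbs_pow]
  have hnormP : Ideal.absNorm P = ℓ ∧ Ideal.absNorm Q = ℓ := by
    have hPne : Ideal.absNorm P ≠ 1 := by
      rw [Ne, Ideal.absNorm_eq_one_iff]; exact hP.ne_top
    have hQne : Ideal.absNorm Q ≠ 1 := by
      rw [Ne, Ideal.absNorm_eq_one_iff]; exact hQ.ne_top
    have hdvdP : Ideal.absNorm P ∣ ℓ ^ 2 := ⟨_, hnorm.symm⟩
    obtain ⟨i, hi, hiP⟩ := (Nat.dvd_prime_pow hlp).mp hdvdP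
    have hdvdQ : Ideal.absNorm Q ∣ ℓ ^ 2 := Dvd.intro_left _ hnorm
    obtain ⟨j, hj, hjQ⟩ := (Nat.dvd_prime_pow hlp).mp hdvdQ
    have hij : ℓ ^ (i + j) = ℓ ^ 2 := by rw [pow_add, ← hiP, ← hjQ, hnorm]
    have hij2 : i + j = 2 := Nat.pow_right_injective hlp.two_le hij
    have hi0 : i ≠ 0 := by rintro rfl; rw [pow_zero] at hiP; exact hPne hiP
    have hj0 : j ≠ 0 := by rintro rfl; rw [pow_zero] at hjQ; exact hQne hjQ
    have hij1 : i = 1 ∧ j = 1 := by omega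
    simp [hiP, hjQ, hij1.1, hij1.2]
  have hcardP : Nat.card (𝓞 K ⧸ P) = ℓ := by
    rw [← Submodule.cardQuot_apply, ← Ideal.absNorm_apply]; exact hnormP.1
  have hcardQ : Nat.card (𝓞 K ⧸ Q) = ℓ := by
    rw [← Submodule.cardQuot_apply, ← Ideal.absNorm_apply]; exact hnormP.2
  have hℓP : (ℓ : 𝓞 K) ∈ P :=
    Ideal.mul_le_left (by rw [← hsplit]; exact Ideal.mem_span_singleton_self _)
  have hℓQ : (ℓ : 𝓞 K) ∈ Q :=
    Ideal.mul_le_right (by rw [← hsplit]; exact Ideal.mem_span_singleton_self _)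
  -- a nontrivial idempotent in the image
  have hsup : P ⊔ Q = ⊤ := Ideal.IsMaximal.coprime_of_ne hP hQ hPQ
  have h1mem : (1 : 𝓞 K) ∈ P ⊔ Q := hsup ▸ Submodule.mem_top
  obtain ⟨p, hp, q, hq, hpq⟩ := Submodule.mem_sup.mp h1mem
  set E : Matrix (Fin 2) (Fin 2) (ZMod ℓ) := ρ q with hE
  have hE2 : E * E = E := by
    have hmem : q * q - q ∈ Ideal.span {(ℓ : 𝓞 K)} := by
      rw [hsplit]
      have heq : q * q - q = -(p * q) := by linear_combination q * hpq
      rw [heq]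
      exact neg_mem (Ideal.mul_mem_mul hp hq)
    have h0 := hρℓ _ hmem
    rw [map_sub, map_mul] at h0
    rw [hE]
    exact sub_eq_zero.mp h0
  have hEcomm : ∀ α : 𝓞 K, ρ α * E = E * ρ α := fun α => by
    rw [hE, ← map_mul, ← map_mul, mul_comm]
  -- E ≠ 0
  have hE0 : E ≠ 0 := by
    intro h0
    have hkerQ : ∀ y ∈ Q, ρ y = 0 := by
      intro y hy
      have hy1 : y = p * y + y * q := by linear_combination -y * hpq
      have hmem : p * y ∈ Ideal.span {(ℓ : 𝓞 K)} := by
        rw [hsplit]; exact Ideal.mul_mem_mul hp hy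
      rw [hy1, map_add, hρℓ _ hmem, map_mul, ← hE, h0, mul_zero, add_zero]
    obtain ⟨c, hc⟩ := aux_scalar_of_ker Q hcardQ hℓQ ρ hkerQ α₀
    exact hα₀ c hc
  -- E ≠ 1
  have hE1 : E ≠ 1 := by
    intro h1
    have hρp : ρ p = 0 := by
      have hp1 : p = 1 - q := by linear_combination hpq
      rw [hp1, map_sub, map_one, ← hE, h1, sub_self]
    have hkerP : ∀ y ∈ P, ρ y = 0 := by
      intro y hy
      have hy1 : y = y * p + y * q := by linear_combination -y * hpq
      have hmem : y * q ∈ Ideal.span {(ℓ : 𝓞 K)} := by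
        rw [hsplit]; exact Ideal.mul_mem_mul hy hq
      rw [hy1, map_add, hρℓ _ hmem, map_mul, hρp, mul_zero, add_zero]
    obtain ⟨c, hc⟩ := aux_scalar_of_ker P hcardP hℓP ρ hkerP α₀
    exact hα₀ c hc
  -- the two invariant lines
  set f : (Fin 2 → ZMod ℓ) →ₗ[ZMod ℓ] (Fin 2 → ZMod ℓ) := E.mulVecLin with hf
  have hff : ∀ v, f (f v) = f v := by
    intro v
    have : f ∘ₗ f = f := by rw [hf, ← Matrix.mulVecLin_mul, hE2]
    exact congrFun (congrArg DFunLike.coe this) v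
  set W₁ : Submodule (ZMod ℓ) (Fin 2 → ZMod ℓ) := LinearMap.ker f with hW₁
  set W₂ : Submodule (ZMod ℓ) (Fin 2 → ZMod ℓ) := LinearMap.range f with hW₂
  have hsum : Module.finrank (ZMod ℓ) W₂ + Module.finrank (ZMod ℓ) W₁ = 2 := by
    rw [hW₁, hW₂, LinearMap.finrank_range_add_finrank_ker, Module.finrank_fin_fun]
  have hW₁ne : W₁ ≠ ⊥ := by
    intro hbot
    have hinj : Function.Injective f := LinearMap.ker_eq_bot.mp hbot
    have hid : ∀ v, f v = v := fun v => hinj (hff v)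
    apply hE1
    ext i j
    have h := congrFun (hid (Pi.single j 1)) i
    simpa [hf, Matrix.mulVecLin_apply, Matrix.one_apply, Pi.single_apply] using h
  have hW₂ne : W₂ ≠ ⊥ := by
    intro hbot
    apply hE0
    have hz : ∀ v, f v = 0 := by
      intro v
      have : f v ∈ W₂ := LinearMap.mem_range_self f v
      rw [hbot] at this
      simpa using this
    ext i j
    have h := congrFun (hz (Pi.single j 1)) i
    simpa [hf, Matrix.mulVecLin_apply] using h
  have hrk₁ : Module.finrank (ZMod ℓ) W₁ = 1 := by
    have h1 : Module.finrank (ZMod ℓ) W₁ ≠ 0 := by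
      rw [Ne, Submodule.finrank_eq_zero]; exact hW₁ne
    have h2 : Module.finrank (ZMod ℓ) W₂ ≠ 0 := by
      rw [Ne, Submodule.finrank_eq_zero]; exact hW₂ne
    omega
  have hrk₂ : Module.finrank (ZMod ℓ) W₂ = 1 := by
    have h1 : Module.finrank (ZMod ℓ) W₁ ≠ 0 := by
      rw [Ne, Submodule.finrank_eq_zero]; exact hW₁ne
    have h2 : Module.finrank (ZMod ℓ) W₂ ≠ 0 := by
      rw [Ne, Submodule.finrank_eq_zero]; exact hW₂ne
    omega
  -- invariance of W₁ and W₂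
  have hinv₁ : ∀ α : 𝓞 K, ∀ w ∈ W₁, (ρ α).mulVec w ∈ W₁ := by
    intro α w hw
    rw [hW₁, LinearMap.mem_ker] at hw ⊢
    have hw' : E.mulVec w = 0 := hw
    show E.mulVec ((ρ α).mulVec w) = 0
    rw [Matrix.mulVec_mulVec, ← hEcomm, ← Matrix.mulVec_mulVec, hw', Matrix.mulVec_zero]
  have hinv₂ : ∀ α : 𝓞 K, ∀ w ∈ W₂, (ρ α).mulVec w ∈ W₂ := by
    intro α w hw
    rw [hW₂, LinearMap.mem_range] at hw ⊢
    obtain ⟨v, rfl⟩ := hw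
    refine ⟨(ρ α).mulVec v, ?_⟩
    simp only [hf, Matrix.mulVecLin_apply, Matrix.mulVec_mulVec]
    rw [hEcomm, ← Matrix.mulVec_mulVec]
  -- the set is exactly {W₁, W₂}
  have hset : {W : Submodule (ZMod ℓ) (Fin 2 → ZMod ℓ) |
      Module.finrank (ZMod ℓ) W = 1 ∧ ∀ α : 𝓞 K, ∀ w ∈ W, (ρ α).mulVec w ∈ W} = {W₁, W₂} := by
    ext W
    simp only [Set.mem_setOf_eq, Set.mem_insert_iff, Set.mem_singleton_iff]
    constructor
    · rintro ⟨hrk, hinv⟩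
      obtain ⟨v, hv0, hvgen⟩ := finrank_eq_one_iff'.mp hrk
      have hvW : (v : Fin 2 → ZMod ℓ) ∈ W := v.2
      have hvne : (v : Fin 2 → ZMod ℓ) ≠ 0 := fun h => hv0 (Subtype.ext h)
      have hEv : E.mulVec (v : Fin 2 → ZMod ℓ) ∈ W := hinv q _ hvW
      obtain ⟨c, hc⟩ := hvgen ⟨E.mulVec v, hEv⟩
      have hc' : c • (v : Fin 2 → ZMod ℓ) = E.mulVec v := congrArg Subtype.val hc
      have hcc : c * c = c := by
        have h1 : E.mulVec (E.mulVec (v : Fin 2 → ZMod ℓ)) = E.mulVec v := by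
          rw [Matrix.mulVec_mulVec, hE2]
        rw [← hc', Matrix.mulVec_smul, ← hc', smul_smul] at h1
        have h2 : (c * c - c) • (v : Fin 2 → ZMod ℓ) = 0 := by
          rw [sub_smul, h1, hc', sub_self]
        rcases smul_eq_zero.mp h2 with h | h
        · exact sub_eq_zero.mp h
        · exact absurd h hvne
      have hc01 : c = 0 ∨ c = 1 := by
        have : c * (c - 1) = 0 := by linear_combination hcc
        rcases mul_eq_zero.mp this with h | h
        · exact Or.inl h
        · exact Or.inr (by linear_combination h)
      rcases hc01 with rfl | rfl
      · left
        have hle : W ≤ W₁ := by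
          intro w hw
          obtain ⟨d, hd⟩ := hvgen ⟨w, hw⟩
          have hd' : d • (v : Fin 2 → ZMod ℓ) = w := congrArg Subtype.val hd
          rw [hW₁, LinearMap.mem_ker]
          simp only [hf, Matrix.mulVecLin_apply]
          rw [← hd', Matrix.mulVec_smul, ← hc', zero_smul, smul_zero]
        exact Submodule.eq_of_le_of_finrank_eq hle (by rw [hrk, hrk₁])
      · right
        have hle : W ≤ W₂ := by
          intro w hw
          obtain ⟨d, hd⟩ := hvgen ⟨w, hw⟩
          have hd' : d • (v : Fin 2 → ZMod ℓ) = w := congrArg Subtype.val hd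
          rw [hW₂, LinearMap.mem_range]
          refine ⟨d • (v : Fin 2 → ZMod ℓ), ?_⟩
          simp only [hf, Matrix.mulVecLin_apply]
          rw [Matrix.mulVec_smul, ← hc', one_smul, hd']
        exact Submodule.eq_of_le_of_finrank_eq hle (by rw [hrk, hrk₂])
    · rintro (rfl | rfl)
      · exact ⟨hrk₁, hinv₁⟩
      · exact ⟨hrk₂, hinv₂⟩
  -- W₁ ≠ W₂
  have hne : W₁ ≠ W₂ := by
    intro heq
    apply hW₂ne
    rw [Submodule.eq_bot_iff]
    rintro x hx
    rw [hW₂, LinearMap.mem_range] at hx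
    obtain ⟨v, rfl⟩ := hx
    have h1 : f v ∈ W₂ := LinearMap.mem_range_self f v
    rw [← heq, hW₁, LinearMap.mem_ker] at h1
    rw [← hff v]
    exact h1
  rw [hset, Set.ncard_pair hne]
end
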